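/- Chain of shifted cylinders inside a parabolic cylinder: let C_r = B_r × (-r^2, r^2) ⊂ R^n × R and z̃ = (x̃, t̃) ∈ C_r. Set r_j = 2^{1-j} r. Then for every j ≥ 1 with C_{r_j}(z̃) ⊄ C_r there exist ρ_j ∈ [r_j/2, r_j], α_j ∈ [1/2, 4], and z_j ∈ C_{r_j}(z̃) ∩ C_r such that the α_j-parabolic cylinder C^{α_j}_{ρ_j}(z_j) := B_{ρ_j}(y_j) × (τ_j - α_j ρ_j^2, τ_j + α_j ρ_j^2) is contained in C_{r_j}(z̃) ∩ C_r and has measure comparable to r_j^{n+2} with constants depending only on n. -/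

import Mathlib

open MeasureTheory Real Set Filter Topology

noncomputable section

abbrev PSpace (n : ℕ) := EuclideanSpace ℝ (Fin n) × ℝ

/-- The parabolic distance on `ℝⁿ × ℝ`. -/
noncomputable def pdist {n : ℕ} (z y : PSpace n) : ℝ :=
  max ‖z.1 - y.1‖ (Real.sqrt |z.2 - y.2|)

/-- The parabolic cube `Q_r(z) = K_r(x) × (t - r², t + r²)`. -/
def pCube {n : ℕ} (z : PSpace n) (r : ℝ) : Set (PSpace n) :=
  {y | (∀ i, |z.1 i - y.1 i| < r) ∧ |z.2 - y.2| < r ^ 2}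

/-- The parabolic Muckenhoupt condition with constant `M`. -/
def IsPApLe {n : ℕ} (w : PSpace n → ℝ) (p M : ℝ) : Prop :=
  ∀ (z : PSpace n) (r : ℝ), 0 < r →
    (⨍ y in pCube z r, w y) * (⨍ y in pCube z r, w y ^ (-1 / (p - 1))) ^ (p - 1) ≤ M

/-- Smooth test functions compactly supported in `U`. -/
def IsTest {n : ℕ} (U : Set (PSpace n)) (φ : PSpace n → ℝ) : Prop :=
  ContDiff ℝ (⊤ : ℕ∞) φ ∧ HasCompactSupport φ ∧ tsupport φ ⊆ U

/-- The caloric Riesz potential of order one. -/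
noncomputable def rieszP {n : ℕ} (f : PSpace n → ℝ) (z : PSpace n) : ℝ :=
  ∫ y, f y / pdist z y ^ (n + 1)

/-- The `α`-parabolic cylinder `C^α_ρ(z) = B_ρ(x) × (t - αρ², t + αρ²)`. -/
def pCyl {n : ℕ} (z : PSpace n) (ρ α : ℝ) : Set (PSpace n) :=
  (Metric.ball z.1 ρ) ×ˢ Set.Ioo (z.2 - α * ρ ^ 2) (z.2 + α * ρ ^ 2)

lemma vol_ball (n : ℕ) (x : EuclideanSpace ℝ (Fin n)) {ρ : ℝ} (h : 0 < ρ) :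
    volume (Metric.ball x ρ)
      = ENNReal.ofReal (ρ ^ n) * volume (Metric.ball (0 : EuclideanSpace ℝ (Fin n)) 1) := by
  rcases Nat.eq_zero_or_pos n with h0 | hn
  · subst h0
    have h1 : ∀ (y : EuclideanSpace ℝ (Fin 0)) (s : ℝ), 0 < s → Metric.ball y s = univ := by
      intro y s hs
      refine eq_univ_of_forall fun w => ?_
      simp [Metric.mem_ball, Subsingleton.elim w y, hs]
    rw [h1 x ρ h, h1 0 1 one_pos]
    simp
  · haveI : Nontrivial (EuclideanSpace ℝ (Fin n)) := by
      apply Module.nontrivial_of_finrank_pos (R := ℝ)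
      rw [finrank_euclideanSpace_fin]; omega
    rw [Measure.addHaar_ball volume x h.le, finrank_euclideanSpace_fin]

set_option maxHeartbeats 1000000 in
/-- chain of shifted cylinders inside a parabolic cylinder: if
`C_{r_j}(z̃) ⊄ C_r` with `r_j = 2^{1-j} r`, one can find `ρ_j ∈ [r_j/2, r_j]`,
`α_j ∈ [1/2, 4]` and `z_j ∈ C_{r_j}(z̃) ∩ C_r` with
`C^{α_j}_{ρ_j}(z_j) ⊆ C_{r_j}(z̃) ∩ C_r` of measure comparable to `r_j^{n+2}`. -/
theorem chain_of_shifted_cylinders (n : ℕ) :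
    ∃ c₁ c₂ : ℝ, 0 < c₁ ∧ 0 < c₂ ∧
    ∀ r : ℝ, 0 < r → ∀ z' ∈ pCyl (0 : PSpace n) r 1, ∀ j : ℕ, 1 ≤ j →
      ¬ pCyl z' ((2 : ℝ) ^ ((1 : ℤ) - (j : ℤ)) * r) 1 ⊆ pCyl (0 : PSpace n) r 1 →
      ∃ (ρ α : ℝ) (zj : PSpace n),
        (2 : ℝ) ^ ((1 : ℤ) - (j : ℤ)) * r / 2 ≤ ρ ∧ ρ ≤ (2 : ℝ) ^ ((1 : ℤ) - (j : ℤ)) * r ∧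
        1 / 2 ≤ α ∧ α ≤ 4 ∧
        zj ∈ pCyl z' ((2 : ℝ) ^ ((1 : ℤ) - (j : ℤ)) * r) 1 ∩ pCyl (0 : PSpace n) r 1 ∧
        pCyl zj ρ α ⊆ pCyl z' ((2 : ℝ) ^ ((1 : ℤ) - (j : ℤ)) * r) 1 ∩ pCyl (0 : PSpace n) r 1 ∧
        ENNReal.ofReal (c₁ * ((2 : ℝ) ^ ((1 : ℤ) - (j : ℤ)) * r) ^ (n + 2))
            ≤ volume (pCyl zj ρ α) ∧
        volume (pCyl zj ρ α)
            ≤ ENNReal.ofReal (c₂ * ((2 : ℝ) ^ ((1 : ℤ) - (j : ℤ)) * r) ^ (n + 2)) := by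
  classical
  set ω := volume (Metric.ball (0 : EuclideanSpace ℝ (Fin n)) 1) with hωdef
  have hω0 : 0 < ω := Metric.measure_ball_pos _ _ one_pos
  have hωt : ω ≠ ⊤ := measure_ball_lt_top.ne
  set W := ω.toReal with hWdef
  clear_value W
  have hW0 : 0 < W := hWdef ▸ ENNReal.toReal_pos hω0.ne' hωt
  refine ⟨W / 2 ^ (n + 2), 8 * W, by positivity, by positivity, ?_⟩
  intro r hr z' hz' j hj _hns
  set rj : ℝ := (2 : ℝ) ^ ((1 : ℤ) - (j : ℤ)) * r with hrjdef
  have hrj0 : 0 < rj := by rw [hrjdef]; positivity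
  clear_value rj
  have hrjr : rj ≤ r := by
    have h1 : (2 : ℝ) ^ ((1 : ℤ) - (j : ℤ)) ≤ 1 :=
      zpow_le_one_of_nonpos₀ (by norm_num) (by omega)
    rw [hrjdef]
    nlinarith
  -- unpack membership of z'
  have hz'' : z'.1 ∈ Metric.ball (0 : EuclideanSpace ℝ (Fin n)) r ∧
      z'.2 ∈ Set.Ioo ((0:ℝ) - 1 * r ^ 2) ((0:ℝ) + 1 * r ^ 2) := hz'
  have hx : ‖z'.1‖ < r := by simpa [mem_ball_zero_iff] using hz''.1
  have ht1 : -r ^ 2 < z'.2 := by have := hz''.2.1; linarith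
  have ht2 : z'.2 < r ^ 2 := by have := hz''.2.2; linarith
  have hxn : (0:ℝ) ≤ ‖z'.1‖ := norm_nonneg _
  -- spatial construction
  obtain ⟨ρ, y, hρl, hρu, hs1, hs2⟩ :
      ∃ (ρ : ℝ) (y : EuclideanSpace ℝ (Fin n)), rj / 2 ≤ ρ ∧ ρ ≤ rj ∧
        Metric.ball y ρ ⊆ Metric.ball z'.1 rj ∧
        Metric.ball y ρ ⊆ Metric.ball (0 : EuclideanSpace ℝ (Fin n)) r := by
    by_cases hc : rj ≤ r - ‖z'.1‖
    · refine ⟨rj, z'.1, by linarith, le_refl _, subset_rfl, Metric.ball_subset_ball' ?_⟩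
      rw [dist_zero_right]
      linarith
    · push_neg at hc
      have hxpos : 0 < ‖z'.1‖ := by
        by_contra h
        push_neg at h
        have : ‖z'.1‖ = 0 := le_antisymm h hxn
        rw [this] at hc
        linarith
      set ρ := (rj + (r - ‖z'.1‖)) / 2 with hρdef
      set y : EuclideanSpace ℝ (Fin n) := ((r - ρ) / ‖z'.1‖) • z'.1 with hydef
      have hrρ : 0 ≤ r - ρ := by simp only [hρdef]; linarith
      have hny : ‖y‖ = r - ρ := by
        rw [hydef, norm_smul, Real.norm_eq_abs, abs_div, abs_of_nonneg hrρ,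
          abs_of_pos hxpos, div_mul_cancel₀ _ hxpos.ne']
      have hnyx : ‖y - z'.1‖ = ‖z'.1‖ - (r - ρ) := by
        have hyx : y - z'.1 = ((r - ρ) / ‖z'.1‖ - 1) • z'.1 := by
          rw [hydef, sub_smul, one_smul]
        have hle : (r - ρ) / ‖z'.1‖ - 1 ≤ 0 := by
          rw [sub_nonpos, div_le_one hxpos]
          simp only [hρdef]; linarith
        rw [hyx, norm_smul, Real.norm_eq_abs, abs_of_nonpos hle, neg_sub, sub_mul,
          div_mul_cancel₀ _ hxpos.ne', one_mul]
      refine ⟨ρ, y, by simp only [hρdef]; linarith, by simp only [hρdef]; linarith,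
        Metric.ball_subset_ball' ?_, Metric.ball_subset_ball' ?_⟩
      · rw [dist_eq_norm, hnyx]
        simp only [hρdef]; linarith
      · rw [dist_zero_right, hny]
        linarith
  have hρ0 : 0 < ρ := lt_of_lt_of_le (by positivity) hρl
  -- temporal construction
  set t := z'.2 with htdef
  clear_value t
  set a := max (t - rj ^ 2) (-r ^ 2) with hadef
  clear_value a
  set b := min (t + rj ^ 2) (r ^ 2) with hbdef
  clear_value b
  have hsqpos : (0:ℝ) < rj ^ 2 := by positivity
  have hL1 : rj ^ 2 ≤ b - a := by
    have hrjsq : rj ^ 2 ≤ r ^ 2 := by nlinarith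
    rw [hadef, hbdef]
    rcases max_cases (t - rj ^ 2) (-r ^ 2) with ⟨he, _⟩ | ⟨he, _⟩ <;>
      rcases min_cases (t + rj ^ 2) (r ^ 2) with ⟨he', _⟩ | ⟨he', _⟩ <;>
      rw [he, he'] <;> linarith
  have hL2 : b - a ≤ 2 * rj ^ 2 := by
    have h1 : t - rj ^ 2 ≤ a := by rw [hadef]; exact le_max_left _ _
    have h2 : b ≤ t + rj ^ 2 := by rw [hbdef]; exact min_le_left _ _
    linarith
  have hab : a < b := by nlinarith
  set τ := (a + b) / 2 with hτdef
  clear_value τ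
  set α := (b - a) / (2 * ρ ^ 2) with hαdef
  clear_value α
  have hαρ : α * ρ ^ 2 = (b - a) / 2 := by
    rw [hαdef]; field_simp
  have hτa : τ - α * ρ ^ 2 = a := by rw [hαρ, hτdef]; ring
  have hτb : τ + α * ρ ^ 2 = b := by rw [hαρ, hτdef]; ring
  have hρsq : rj ^ 2 / 4 ≤ ρ ^ 2 := by nlinarith
  have hρsq' : ρ ^ 2 ≤ rj ^ 2 := by nlinarith
  have hα1 : 1 / 2 ≤ α := by
    rw [hαdef, le_div_iff₀ (by positivity)]
    linarith
  have hα2 : α ≤ 4 := by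
    rw [hαdef, div_le_iff₀ (by positivity)]
    linarith
  -- the point
  have ha1 : t - rj ^ 2 ≤ a := by rw [hadef]; exact le_max_left _ _
  have ha2 : -r ^ 2 ≤ a := by rw [hadef]; exact le_max_right _ _
  have hb1 : b ≤ t + rj ^ 2 := by rw [hbdef]; exact min_le_left _ _
  have hb2 : b ≤ r ^ 2 := by rw [hbdef]; exact min_le_right _ _
  have hτ1 : a < τ := by rw [hτdef]; linarith
  have hτ2 : τ < b := by rw [hτdef]; linarith
  have hset : pCyl ((y, τ) : PSpace n) ρ α = Metric.ball y ρ ×ˢ Set.Ioo a b := by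
    rw [pCyl]
    dsimp only
    rw [hτa, hτb]
  have hvol : volume (pCyl ((y, τ) : PSpace n) ρ α)
      = ENNReal.ofReal (ρ ^ n * W * (2 * α * ρ ^ 2)) := by
    rw [hset, MeasureTheory.Measure.volume_eq_prod, Measure.prod_prod, vol_ball n y hρ0,
      Real.volume_Ioo, ← hωdef]
    have h2 : b - a = 2 * α * ρ ^ 2 := by rw [← hτa, ← hτb]; ring
    rw [h2, ← ENNReal.ofReal_toReal hωt, ← hWdef, ← ENNReal.ofReal_mul (by positivity),
      ← ENNReal.ofReal_mul (by positivity)]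
  refine ⟨ρ, α, (y, τ), hρl, hρu, hα1, hα2, ?_, ?_, ?_, ?_⟩
  · constructor
    · rw [pCyl]
      refine Set.mk_mem_prod (hs1 (Metric.mem_ball_self hρ0)) ⟨?_, ?_⟩ <;>
        · rw [← htdef]; linarith
    · rw [pCyl]
      refine Set.mk_mem_prod (hs2 (Metric.mem_ball_self hρ0)) ⟨?_, ?_⟩ <;>
        · simp only [Prod.fst_zero, Prod.snd_zero]; linarith
  · -- subset
    rw [hset]
    refine Set.subset_inter ?_ ?_
    · rw [pCyl]
      refine Set.prod_mono hs1 (Set.Ioo_subset_Ioo ?_ ?_) <;>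
        · rw [← htdef]; linarith
    · rw [pCyl]
      refine Set.prod_mono hs2 (Set.Ioo_subset_Ioo ?_ ?_) <;>
        · simp only [Prod.fst_zero, Prod.snd_zero]; linarith
  · -- lower bound
    rw [hvol]
    apply ENNReal.ofReal_le_ofReal
    have hkey : W / 2 ^ (n + 2) * rj ^ (n + 2) = W * ((rj / 2) ^ n * (rj ^ 2 / 4)) := by
      rw [div_pow, pow_add]
      field_simp
      ring
    have htime : rj ^ 2 / 4 ≤ 2 * α * ρ ^ 2 := by nlinarith [sq_nonneg ρ, hα1, hρsq]
    have hspace : (rj / 2) ^ n ≤ ρ ^ n := pow_le_pow_left₀ (by positivity) hρl n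
    calc W / 2 ^ (n + 2) * rj ^ (n + 2) = W * ((rj / 2) ^ n * (rj ^ 2 / 4)) := hkey
      _ ≤ W * (ρ ^ n * (2 * α * ρ ^ 2)) := by
          apply mul_le_mul_of_nonneg_left _ hW0.le
          exact mul_le_mul hspace htime (by positivity) (by positivity)
      _ = ρ ^ n * W * (2 * α * ρ ^ 2) := by ring
  · -- upper bound
    rw [hvol]
    apply ENNReal.ofReal_le_ofReal
    have hspace : ρ ^ n ≤ rj ^ n := pow_le_pow_left₀ hρ0.le hρu n
    have htime : 2 * α * ρ ^ 2 ≤ 8 * rj ^ 2 := by nlinarith [sq_nonneg ρ, hα2, hρsq']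
    calc ρ ^ n * W * (2 * α * ρ ^ 2) = W * (ρ ^ n * (2 * α * ρ ^ 2)) := by ring
      _ ≤ W * (rj ^ n * (8 * rj ^ 2)) := by
          apply mul_le_mul_of_nonneg_left _ hW0.le
          exact mul_le_mul hspace htime (by positivity) (by positivity)
      _ = 8 * W * rj ^ (n + 2) := by rw [pow_add]; ring
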